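/- A rooted tree on a fixed vertex set N is uniquely determined by its set of leaves together with the family of level sets of all its leaves. That is, if two trees G = (N,E) and G' = (N,E') on the same vertex set and same root satisfy F(G) = F(G') and N_w^k(G) = N_w^k(G') for every leaf w and every 0 ≤ k ≤ d_w, then E = E'. -/

import Mathlib

open scoped Classical

/-- A finite rooted tree encoded by a parent function: every node reaches the
root by iterating `parent`, and the root is its own parent. -/
structure GridTree (V : Type) [Fintype V] [DecidableEq V] where
  root : V
  parent : V → V
  parent_root : parent root = root
  reaches : ∀ v, ∃ k, parent^[k] v = root

namespace GridTree

variable {V : Type} [Fintype V] [DecidableEq V]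

/-- Depth of a node: distance (number of edges) to the root. -/
noncomputable def depth (T : GridTree V) (v : V) : ℕ := Nat.find (T.reaches v)

/-- The depth-`k` ancestor `α_v^k` of `v` (for `k ≤ depth v`). -/
noncomputable def anc (T : GridTree V) (v : V) (k : ℕ) : V :=
  T.parent^[T.depth v - k] v

/-- Ancestor set `A_v`: all nodes on the path from the root to `v`, including `v`. -/
def ancSet (T : GridTree V) (v : V) : Set V := {u | ∃ j, T.parent^[j] v = u}

/-- Descendant set `D_n`: all nodes whose ancestor set contains `n`. -/
def desc (T : GridTree V) (n : V) : Set V := {m | n ∈ T.ancSet m}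

/-- The `k`-th level set `N_m^k` of node `m`. -/
noncomputable def level (T : GridTree V) (m : V) (k : ℕ) : Set V :=
  if k = T.depth m then T.desc m
  else T.desc (T.anc m k) \ T.desc (T.anc m (k + 1))

/-- A leaf: a node with no descendants other than itself. -/
def IsLeaf (T : GridTree V) (m : V) : Prop := T.desc m = {m}

/-- Path-resistance matrix: `R m n` is the sum of the resistances of edges with
both endpoints in `A_m ∩ A_n`.  The edge above a non-root node `c` (joining `c`
to its parent) has resistance `r c`. -/
noncomputable def Rmat (T : GridTree V) (r : V → ℝ) (m n : V) : ℝ :=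
  ∑ c : V, if c ∈ T.ancSet m ∧ c ∈ T.ancSet n ∧ c ≠ T.root then r c else 0

end GridTree

/-!
A rooted tree is determined by the family of its descendant sets: `D_x` is the smallest member
of the family containing `x`, so the family determines every `D_x`, and the descendant sets
determine the parent map. For a leaf `w` the sets `D_{α_w^k}` are unions of the level sets
`N_w^j`, `j ≥ k`, so the level sets of the leaves of `T` place every descendant set of `T` in
the family of `T'`; since both families have `|V|` members, they coincide.
-/

namespace GridTree

variable {V : Type} [Fintype V] [DecidableEq V] (T : GridTree V)

lemma iterate_depth (v : V) : T.parent^[T.depth v] v = T.root :=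
  Nat.find_spec (T.reaches v)

lemma iterate_ne_root_of_lt_depth {v : V} {i : ℕ} (h : i < T.depth v) :
    T.parent^[i] v ≠ T.root :=
  Nat.find_min (T.reaches v) h

lemma iterate_root (j : ℕ) : T.parent^[j] T.root = T.root :=
  Function.iterate_fixed T.parent_root j

lemma eq_root_of_parent_eq_self {v : V} (h : T.parent v = v) : v = T.root := by
  simpa only [Function.iterate_fixed h] using T.iterate_depth v

lemma depth_root : T.depth T.root = 0 :=
  Nat.eq_zero_of_le_zero (Nat.find_le rfl)

lemma iterate_of_depth_le {v : V} {j : ℕ} (h : T.depth v ≤ j) :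
    T.parent^[j] v = T.root := by
  obtain ⟨i, rfl⟩ := Nat.exists_eq_add_of_le h
  rw [Nat.add_comm, Function.iterate_add_apply, iterate_depth, iterate_root]

lemma depth_iterate {v : V} {j : ℕ} (h : j ≤ T.depth v) :
    T.depth (T.parent^[j] v) = T.depth v - j := by
  rw [depth, Nat.find_eq_iff, ← Function.iterate_add_apply, Nat.sub_add_cancel h]
  refine ⟨T.iterate_depth v, fun i hi => ?_⟩
  rw [← Function.iterate_add_apply]
  exact T.iterate_ne_root_of_lt_depth (by omega)

lemma anc_depth_self (w : V) : T.anc w (T.depth w) = w := by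
  rw [anc, Nat.sub_self, Function.iterate_zero_apply]

lemma parent_anc_succ {w : V} {k : ℕ} (hk : k < T.depth w) :
    T.parent (T.anc w (k + 1)) = T.anc w k := by
  rw [anc, anc, ← Function.iterate_succ_apply' T.parent]
  congr 1
  omega

lemma mem_desc_self (n : V) : n ∈ T.desc n := ⟨0, rfl⟩

lemma mem_desc_anc (w : V) (k : ℕ) : w ∈ T.desc (T.anc w k) := ⟨_, rfl⟩

lemma desc_subset_desc {m n : V} (h : m ∈ T.desc n) : T.desc m ⊆ T.desc n := by
  obtain ⟨j, hj⟩ := h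
  rintro x ⟨i, hi⟩
  exact ⟨j + i, by rw [Function.iterate_add_apply, hi, hj]⟩

lemma parent_mem_desc_of_mem_desc_of_ne {v n : V} (h : v ∈ T.desc n) (hne : v ≠ n) :
    T.parent v ∈ T.desc n := by
  obtain ⟨_ | i, hi⟩ := h
  · exact absurd hi hne
  · exact ⟨i, by rwa [← Function.iterate_succ_apply]⟩

lemma depth_le_and_anc_eq_of_mem_desc {m n : V} (h : m ∈ T.desc n) :
    T.depth n ≤ T.depth m ∧ T.anc m (T.depth n) = n := by
  obtain ⟨j, rfl⟩ := h
  by_cases hj : j ≤ T.depth m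
  · rw [T.depth_iterate hj, anc]
    exact ⟨Nat.sub_le _ _, by congr 1; omega⟩
  · rw [T.iterate_of_depth_le (by omega), depth_root, anc, Nat.sub_zero]
    exact ⟨Nat.zero_le _, T.iterate_depth m⟩

lemma depth_le_of_mem_desc {m n : V} (h : m ∈ T.desc n) : T.depth n ≤ T.depth m :=
  (T.depth_le_and_anc_eq_of_mem_desc h).1

lemma anc_eq_of_mem_desc {m n : V} (h : m ∈ T.desc n) : T.anc m (T.depth n) = n :=
  (T.depth_le_and_anc_eq_of_mem_desc h).2

lemma eq_of_mem_desc_of_mem_desc {m n : V} (hmn : m ∈ T.desc n) (hnm : n ∈ T.desc m) :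
    m = n := by
  have hd := le_antisymm (T.depth_le_of_mem_desc hmn) (T.depth_le_of_mem_desc hnm)
  rw [← T.anc_eq_of_mem_desc hnm, ← hd, anc_depth_self]

lemma desc_injective : Function.Injective T.desc := fun m n h =>
  T.eq_of_mem_desc_of_mem_desc (h ▸ T.mem_desc_self m) (h ▸ T.mem_desc_self n)

lemma mem_desc_root (v : V) : v ∈ T.desc T.root := ⟨_, T.iterate_depth v⟩

lemma exists_isLeaf_mem_desc (n : V) : ∃ w ∈ T.desc n, T.IsLeaf w := by
  obtain ⟨w, hwn, hmax⟩ := Set.Finite.exists_maximalFor T.depth (T.desc n)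
    (Set.toFinite _) ⟨n, T.mem_desc_self n⟩
  refine ⟨w, hwn, Set.eq_singleton_iff_unique_mem.2 ⟨T.mem_desc_self w, fun x hx => ?_⟩⟩
  have hd := le_antisymm (hmax (T.desc_subset_desc hwn hx) (T.depth_le_of_mem_desc hx))
    (T.depth_le_of_mem_desc hx)
  rw [← T.anc_eq_of_mem_desc hx, ← hd, anc_depth_self]

lemma level_depth (w : V) : T.level w (T.depth w) = T.desc w := by
  rw [level, if_pos rfl]

lemma desc_anc_eq_level_union {w : V} {k : ℕ} (hk : k < T.depth w) :
    T.desc (T.anc w k) = T.level w k ∪ T.desc (T.anc w (k + 1)) := by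
  rw [level, if_neg hk.ne]
  refine (Set.sdiff_union_of_subset (T.desc_subset_desc ⟨1, ?_⟩)).symm
  exact T.parent_anc_succ hk

variable {T} {T' : GridTree V}

lemma depth_eq_of_level_depth_eq {w : V}
    (h : T.level w (T.depth w) = T'.level w (T.depth w)) : T.depth w = T'.depth w := by
  by_contra hne
  have hw : w ∈ T'.level w (T.depth w) := h ▸ T.level_depth w ▸ T.mem_desc_self w
  rw [level, if_neg hne] at hw
  exact hw.2 (T'.mem_desc_anc w _)

lemma desc_anc_eq_of_level_eq {w : V} (hd : T.depth w = T'.depth w)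
    (h : ∀ k ≤ T.depth w, T.level w k = T'.level w k) {k : ℕ} (hk : k ≤ T.depth w) :
    T.desc (T.anc w k) = T'.desc (T'.anc w k) := by
  induction hk using Nat.decreasingInduction with
  | self => rw [anc_depth_self, hd, anc_depth_self, ← level_depth, ← level_depth, ← hd,
      h _ le_rfl]
  | of_succ k hk ih =>
    rw [T.desc_anc_eq_level_union hk, T'.desc_anc_eq_level_union (hd ▸ hk), ih, h k hk.le]

lemma range_desc_subset_of_level_eq
    (hlevel : ∀ w, T.IsLeaf w → ∀ k ≤ T.depth w, T.level w k = T'.level w k) :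
    Set.range T.desc ⊆ Set.range T'.desc := by
  rintro _ ⟨n, rfl⟩
  obtain ⟨w, hwn, hw⟩ := T.exists_isLeaf_mem_desc n
  have hd := depth_eq_of_level_depth_eq (hlevel w hw _ le_rfl)
  refine ⟨T'.anc w (T.depth n), ?_⟩
  rw [← desc_anc_eq_of_level_eq hd (hlevel w hw) (T.depth_le_of_mem_desc hwn),
    T.anc_eq_of_mem_desc hwn]

lemma desc_subset_of_range_desc_subset (h : Set.range T.desc ⊆ Set.range T'.desc) (x : V) :
    T'.desc x ⊆ T.desc x := by
  obtain ⟨y, hy⟩ := h ⟨x, rfl⟩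
  rw [← hy]
  exact T'.desc_subset_desc (hy ▸ T.mem_desc_self x)

lemma desc_eq_of_range_desc_subset (h : Set.range T.desc ⊆ Set.range T'.desc) :
    T.desc = T'.desc := by
  have hrange : Set.range T.desc = Set.range T'.desc :=
    Set.eq_of_subset_of_ncard_le h <| by
      rw [Set.ncard_range_of_injective T.desc_injective,
        Set.ncard_range_of_injective T'.desc_injective]
  funext x
  exact (desc_subset_of_range_desc_subset hrange.ge x).antisymm
    (desc_subset_of_range_desc_subset h x)

lemma root_eq_of_desc_eq (h : T.desc = T'.desc) : T.root = T'.root :=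
  T'.eq_of_mem_desc_of_mem_desc (T'.mem_desc_root T.root) (h ▸ T.mem_desc_root T'.root)

lemma parent_mem_desc_parent_of_desc_eq (h : T.desc = T'.desc) {v : V} (hv : v ≠ T'.root) :
    T.parent v ∈ T.desc (T'.parent v) := by
  refine T.parent_mem_desc_of_mem_desc_of_ne ?_ fun hpv => hv ?_
  · exact h ▸ ⟨1, rfl⟩
  · exact T'.eq_root_of_parent_eq_self hpv.symm

lemma parent_eq_of_desc_eq (h : T.desc = T'.desc) : T.parent = T'.parent := by
  have hroot := root_eq_of_desc_eq h
  funext v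
  by_cases hv : v = T.root
  · rw [hv, T.parent_root, hroot, T'.parent_root]
  · refine T.eq_of_mem_desc_of_mem_desc (parent_mem_desc_parent_of_desc_eq h (hroot ▸ hv)) ?_
    exact h ▸ parent_mem_desc_parent_of_desc_eq h.symm hv

end GridTree

theorem stmt8_general {V : Type} [Fintype V] [DecidableEq V] (T T' : GridTree V)
    (hlevel : ∀ w, T.IsLeaf w → ∀ k ≤ T.depth w, T.level w k = T'.level w k) :
    T.parent = T'.parent :=
  GridTree.parent_eq_of_desc_eq
    (GridTree.desc_eq_of_range_desc_subset (GridTree.range_desc_subset_of_level_eq hlevel))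

/-- Lemma 4: a rooted tree on a fixed vertex set is uniquely determined by its
leaf set together with the level sets of all its leaves. -/
theorem stmt8 {V : Type} [Fintype V] [DecidableEq V] (T T' : GridTree V)
    (hroot : T.root = T'.root)
    (hleaf : ∀ w, T.IsLeaf w ↔ T'.IsLeaf w)
    (hlevel : ∀ w, T.IsLeaf w → ∀ k ≤ T.depth w, T.level w k = T'.level w k) :
    T.parent = T'.parent :=
  stmt8_general T T' hlevel
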